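/- arXiv:2009.07350 — 3 statements merged into one kernel-verified Lean document; each statement's English description precedes it below -/
import Mathlib

section
/- Let K be a field, Γ a group, ρ₀ : Γ → GL_n(K) a group homomorphism, and α : Γ → M_n(K) a function into the n×n matrices over K. For each γ ∈ Γ, the element (1 + ε·α(γ))·ρ₀(γ) of M_n(K[ε]) is invertible, and the map γ ↦ (1 + ε·α(γ))·ρ₀(γ) is a group homomorphism Γ → GL_n(K[ε]) if and only if α satisfies the 1-cocycle condition α(γβ) = α(γ) + ρ₀(γ)·α(β)·ρ₀(γ)⁻¹ for all γ, β ∈ Γ (i.e., α is a 1-cocycle of Γ with coefficients in M_n(K) for the adjoint action γ·m = ρ₀(γ)·m·ρ₀(γ)⁻¹). -/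
open Matrix DualNumber

/-- The reduction `K[ε] → K` sending `ε` to `0`. -/
noncomputable def redK (K : Type*) [Field K] : DualNumber K →+* K :=
  (TrivSqZeroExt.fstHom K K K).toRingHom

/-- The canonical inclusion of matrices over `K` into matrices over `K[ε]`. -/
noncomputable def inclM (K : Type*) [Field K] (n : ℕ) :
    Matrix (Fin n) (Fin n) K →+* Matrix (Fin n) (Fin n) (DualNumber K) :=
  RingHom.mapMatrix (algebraMap K (DualNumber K))

/-!
Since `ε² = 0`, `1 + ε • a` is a unit with inverse `1 - ε • a`. Pushing a unit `u` past
`1 + ε • y` conjugates `y`, so `(1 + ε • x) u (1 + ε • y) v = (1 + ε • (x + u y u⁻¹)) (u v)`.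
Comparing this with the value at `γ β` and cancelling the unit `ρ₀ (γ β)` turns multiplicativity
of `γ ↦ (1 + ε • α γ) ρ₀ γ` into the cocycle identity, once the factor `ε` is removed using that
`ε • _` is injective on matrices over `K`.
-/

section SquareZeroDeformation

variable {S A : Type*} [CommSemiring S] [Ring A] [Algebra S A] {e : S}

theorem isUnit_one_add_smul_of_mul_self_eq_zero (he : e * e = 0) (x : A) :
    IsUnit (1 + e • x) :=
  IsNilpotent.isUnit_one_add ⟨2, by rw [smul_pow, pow_two e, he, zero_smul]⟩

theorem one_add_smul_mul_one_add_smul (he : e * e = 0) (x y : A) :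
    (1 + e • x) * (1 + e • y) = 1 + e • (x + y) := by
  simp only [add_mul, mul_add, one_mul, mul_one, smul_mul_smul_comm, he, zero_smul, add_zero,
    smul_add, add_assoc]

theorem Units.mul_one_add_smul (u : Aˣ) (x : A) :
    (u : A) * (1 + e • x) = (1 + e • (u * x * ↑u⁻¹)) * u := by
  simp only [mul_add, add_mul, mul_one, one_mul, mul_smul_comm, smul_mul_assoc, mul_assoc,
    Units.inv_mul]

theorem one_add_smul_mul_units_mul (he : e * e = 0) (u v : Aˣ) (x y : A) :
    (1 + e • x) * u * ((1 + e • y) * v) = (1 + e • (x + u * y * ↑u⁻¹)) * ↑(u * v) := by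
  rw [Units.val_mul, mul_assoc, ← mul_assoc (u : A), Units.mul_one_add_smul, mul_assoc,
    ← mul_assoc, one_add_smul_mul_one_add_smul he]

theorem one_add_smul_mul_units_inj (u : Aˣ) (x y : A) :
    (1 + e • x) * u = (1 + e • y) * u ↔ e • x = e • y := by
  rw [Units.mul_left_inj, add_right_inj]

theorem deformation_map_mul_iff {Γ : Type*} [Group Γ] (he : e * e = 0) (ρ : Γ →* Aˣ)
    (c : Γ → A) (γ β : Γ) :
    (1 + e • c (γ * β)) * ρ (γ * β) = (1 + e • c γ) * ρ γ * ((1 + e • c β) * ρ β) ↔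
      e • c (γ * β) = e • (c γ + ρ γ * c β * ↑(ρ γ)⁻¹) := by
  rw [one_add_smul_mul_units_mul he, ← map_mul, one_add_smul_mul_units_inj]

end SquareZeroDeformation

theorem exists_monoidHom_units_val_eq_iff {Γ M : Type*} [Group Γ] [Monoid M] {f : Γ → M}
    (hf : ∀ γ, IsUnit (f γ)) :
    (∃ F : Γ →* Mˣ, ∀ γ, (F γ : M) = f γ) ↔ ∀ γ β, f (γ * β) = f γ * f β := by
  constructor
  · rintro ⟨F, hF⟩ γ β
    rw [← hF, ← hF, ← hF, map_mul, Units.val_mul]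
  · intro hmul
    refine ⟨MonoidHom.mk' (fun γ => (hf γ).unit) fun γ β => Units.ext ?_, fun γ => rfl⟩
    simp only [IsUnit.unit_spec, Units.val_mul, hmul]

section Matrices

variable {K : Type*} [Field K] {n : ℕ}

theorem eps_smul_inclM_injective :
    Function.Injective fun M : Matrix (Fin n) (Fin n) K => (eps : DualNumber K) • inclM K n M := by
  intro M N h
  ext i j
  simpa [inclM, TrivSqZeroExt.algebraMap_eq_inl] using congrArg (fun X => (X i j).snd) h

theorem inclM_conj (g : GL (Fin n) K) (M : Matrix (Fin n) (Fin n) K) :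
    inclM K n ((g : Matrix (Fin n) (Fin n) K) * M * (g : Matrix (Fin n) (Fin n) K)⁻¹) =
      (Units.map (inclM K n).toMonoidHom g : Matrix (Fin n) (Fin n) (DualNumber K)) *
        inclM K n M *
          ((Units.map (inclM K n).toMonoidHom g)⁻¹ : GL (Fin n) (DualNumber K)) := by
  rw [← Matrix.coe_units_inv, map_mul, map_mul]
  rfl

end Matrices

/-- the first-order deformation `γ ↦ (1 + ε·α(γ))·ρ₀(γ)` takes invertible
values, and it is a group homomorphism `Γ → GL_n(K[ε])` if and only if `α` is a 1-cocycle
for the adjoint action `γ·m = ρ₀(γ)·m·ρ₀(γ)⁻¹`. -/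
theorem stmt_1 (K : Type*) [Field K] (n : ℕ) (Γ : Type*) [Group Γ]
    (ρ₀ : Γ →* GL (Fin n) K) (α : Γ → Matrix (Fin n) (Fin n) K) :
    (∀ γ : Γ, IsUnit
      ((1 + (DualNumber.eps : DualNumber K) • inclM K n (α γ)) *
        inclM K n (ρ₀ γ : Matrix (Fin n) (Fin n) K))) ∧
    ((∃ F : Γ →* GL (Fin n) (DualNumber K),
        ∀ γ : Γ, (F γ : Matrix (Fin n) (Fin n) (DualNumber K)) =
          (1 + (DualNumber.eps : DualNumber K) • inclM K n (α γ)) *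
            inclM K n (ρ₀ γ : Matrix (Fin n) (Fin n) K)) ↔
      (∀ γ β : Γ, α (γ * β) =
        α γ + (ρ₀ γ : Matrix (Fin n) (Fin n) K) * α β *
          ((ρ₀ γ)⁻¹ : Matrix (Fin n) (Fin n) K))) := by
  have hε : (eps : DualNumber K) * eps = 0 := eps_mul_eps
  have hunit : ∀ γ, IsUnit ((1 + (eps : DualNumber K) • inclM K n (α γ)) *
      inclM K n (ρ₀ γ : Matrix (Fin n) (Fin n) K)) := fun γ =>
    (isUnit_one_add_smul_of_mul_self_eq_zero hε (inclM K n (α γ))).mul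
      ((ρ₀ γ).isUnit.map (inclM K n))
  refine ⟨hunit, (exists_monoidHom_units_val_eq_iff hunit).trans (forall₂_congr fun γ β => ?_)⟩
  have key := deformation_map_mul_iff hε
    ((Units.map (inclM K n).toMonoidHom).comp ρ₀) (fun γ => inclM K n (α γ)) γ β
  simp only [MonoidHom.comp_apply] at key
  rw [← inclM_conj, ← map_add] at key
  exact key.trans eps_smul_inclM_injective.eq_iff
end

section
/- Let K be a field, g₀ ∈ GL_n(K), and a ∈ M_n(K). The element (1 + ε·a)·g₀ of GL_n(K[ε]) is conjugate to g₀ by an element of GL_n(K[ε]) if and only if there exists ξ ∈ M_n(K) such that a = ξ − g₀·ξ·g₀⁻¹. -/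
open Matrix DualNumber

/-! Write `u = u₀ + ε u₁`. The two components of `(1 + ε a) g₀ u = u g₀` say that `u₀` commutes
with `g₀` and that `g₀ u₁ + a g₀ u₀ = u₁ g₀`, so `ξ = u₁ u₀⁻¹` works. Conversely, since `ε² = 0`,
`u = 1 + ε ξ` is a unit satisfying `(1 + ε a) g₀ u = u g₀`. -/

theorem eq_sub_mul_mul_inv_of_mul_add_mul_eq {A : Type*} [Ring A] {g u : Aˣ} {a u₁ : A}
    (hcomm : Commute (g : A) u) (h : g * u₁ + a * g * u = u₁ * g) :
    a = u₁ * ↑u⁻¹ - g * (u₁ * ↑u⁻¹) * ↑g⁻¹ := by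
  have hcomm' : Commute (g : A) ↑u⁻¹ := hcomm.units_inv_right
  calc a = a * g * u * ↑u⁻¹ * ↑g⁻¹ := by simp [mul_assoc]
    _ = (u₁ * g - g * u₁) * ↑u⁻¹ * ↑g⁻¹ := by rw [← h, add_sub_cancel_left]
    _ = u₁ * ↑u⁻¹ - g * (u₁ * ↑u⁻¹) * ↑g⁻¹ := by
      rw [sub_mul, sub_mul, mul_assoc u₁, hcomm'.eq]
      simp [mul_assoc]

theorem one_add_smul_mul_mul_one_add_smul {R B : Type*} [CommRing R] [Ring B] [Algebra R B]
    {e : R} (he : e * e = 0) {A G X : B} (h : A * G = X * G - G * X) :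
    (1 + e • A) * G * (1 + e • X) = (1 + e • X) * G := by
  calc (1 + e • A) * G * (1 + e • X)
      = G + e • (G * X) + e • (A * G) + (e * e) • (A * G * X) := by
        simp only [add_mul, mul_add, one_mul, mul_one, smul_mul_assoc, mul_smul_comm, smul_add,
          smul_smul]
        abel
    _ = (1 + e • X) * G := by
        rw [he, zero_smul, add_zero, h, add_mul, one_mul, smul_mul_assoc, smul_sub]
        abel

theorem IsNilpotent.smul_left {R B : Type*} [CommSemiring R] [Semiring B] [Algebra R B] {e : R}
    (he : IsNilpotent e) (X : B) : IsNilpotent (e • X) := by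
  rw [Algebra.smul_def]
  exact (Algebra.commute_algebraMap_left e X).isNilpotent_mul_right (he.map (algebraMap R B))

section DualMatrix

variable {K : Type*} [CommSemiring K] {n : Type*}

noncomputable def Matrix.dualFst [Fintype n] [DecidableEq n] :
    Matrix n n K[ε] →+* Matrix n n K :=
  (TrivSqZeroExt.fstHom K K K).toRingHom.mapMatrix

def Matrix.dualSnd (X : Matrix n n K[ε]) : Matrix n n K :=
  X.map TrivSqZeroExt.snd

@[simp]
theorem Matrix.dualSnd_add (X Y : Matrix n n K[ε]) : dualSnd (X + Y) = dualSnd X + dualSnd Y :=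
  rfl

@[simp]
theorem Matrix.dualSnd_mul [Fintype n] [DecidableEq n] (X Y : Matrix n n K[ε]) :
    dualSnd (X * Y) = dualFst X * dualSnd Y + dualSnd X * dualFst Y := by
  ext i j
  simp [dualFst, dualSnd, mul_apply, TrivSqZeroExt.snd_sum, Finset.sum_add_distrib]

@[simp]
theorem Matrix.dualSnd_one [DecidableEq n] : dualSnd (1 : Matrix n n K[ε]) = 0 := by
  ext i j
  by_cases h : i = j <;> simp [dualSnd, h]

@[simp]
theorem Matrix.dualFst_eps_smul [Fintype n] [DecidableEq n] (X : Matrix n n K[ε]) :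
    dualFst ((ε : K[ε]) • X) = 0 := by
  ext i j
  simp [dualFst]

@[simp]
theorem Matrix.dualSnd_eps_smul [Fintype n] [DecidableEq n] (X : Matrix n n K[ε]) :
    dualSnd ((ε : K[ε]) • X) = dualFst X := by
  ext i j
  simp [dualFst, dualSnd]

end DualMatrix

section inclM

variable {K : Type*} [Field K] {n : ℕ}

@[simp]
theorem dualFst_inclM (x : Matrix (Fin n) (Fin n) K) : dualFst (inclM K n x) = x := by
  ext i j
  simp [dualFst, inclM]

@[simp]
theorem dualSnd_inclM (x : Matrix (Fin n) (Fin n) K) : dualSnd (inclM K n x) = 0 := by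
  ext i j
  simp [dualSnd, inclM, TrivSqZeroExt.algebraMap_eq_inl]

end inclM

/-- the element `(1 + ε·a)·g₀` of `GL_n(K[ε])` is conjugate to `g₀` by an
element of `GL_n(K[ε])` if and only if `a = ξ − g₀·ξ·g₀⁻¹` for some matrix `ξ` over `K`. -/
theorem stmt_4 (K : Type*) [Field K] (n : ℕ) (g₀ : GL (Fin n) K)
    (a : Matrix (Fin n) (Fin n) K) :
    (∃ u : GL (Fin n) (DualNumber K),
        (1 + (DualNumber.eps : DualNumber K) • inclM K n a) *
            inclM K n (g₀ : Matrix (Fin n) (Fin n) K) =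
          (u : Matrix (Fin n) (Fin n) (DualNumber K)) *
            inclM K n (g₀ : Matrix (Fin n) (Fin n) K) *
            ((u⁻¹ : GL (Fin n) (DualNumber K)) : Matrix (Fin n) (Fin n) (DualNumber K))) ↔
      (∃ ξ : Matrix (Fin n) (Fin n) K,
        a = ξ - (g₀ : Matrix (Fin n) (Fin n) K) * ξ *
          ((g₀⁻¹ : GL (Fin n) K) : Matrix (Fin n) (Fin n) K)) := by
  simp_rw [Units.eq_mul_inv_iff_mul_eq]
  constructor
  · rintro ⟨u, hu⟩
    have hfst := congrArg dualFst hu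
    have hsnd := congrArg dualSnd hu
    simp only [map_mul, map_add, map_one, dualFst_eps_smul, add_zero, dualFst_inclM, one_mul,
      dualSnd_mul, dualSnd_inclM, mul_zero, dualSnd_add, dualSnd_one, dualSnd_eps_smul,
      zero_add] at hfst hsnd
    exact ⟨_, eq_sub_mul_mul_inv_of_mul_add_mul_eq
      (u := Units.map (dualFst (K := K) (n := Fin n)).toMonoidHom u) hfst hsnd⟩
  · rintro ⟨ξ, rfl⟩
    have hnil := IsNilpotent.smul_left (R := K[ε]) isNilpotent_eps (inclM K n ξ)
    refine ⟨hnil.isUnit_one_add.unit, ?_⟩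
    rw [IsUnit.unit_spec]
    refine one_add_smul_mul_mul_one_add_smul (e := (ε : K[ε])) eps_mul_eps ?_
    simp [← map_mul, ← map_sub, sub_mul, mul_assoc]
end

section
/- Let Γ be a group, K a field, and ρ₀ : Γ → GL_n(K) a group homomorphism. There is a bijection between: (a) the set of group homomorphisms ρ : Γ → GL_n(K[ε]) whose composition with the reduction map GL_n(K[ε]) → GL_n(K) equals ρ₀, taken up to conjugation by elements of the kernel of the reduction map; and (b) the first group cohomology H¹(Γ, M_n(K)) of Γ with coefficients in the additive group M_n(K) equipped with the adjoint action γ·m = ρ₀(γ)·m·ρ₀(γ)⁻¹ (i.e., 1-cocycles modulo 1-coboundaries). -/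
open Matrix DualNumber

/-- The reduction map `GL_n(K[ε]) → GL_n(K)`. -/
noncomputable def RedGL (K : Type*) [Field K] (n : ℕ) :
    GL (Fin n) (DualNumber K) →* GL (Fin n) K :=
  Units.map (RingHom.mapMatrix (redK K)).toMonoidHom

/-- 1-cocycles of `Γ` valued in `M_n(K)` for the adjoint action of `ρ₀`. -/
def Cocycle {K : Type*} [Field K] {n : ℕ} {Γ : Type*} [Group Γ]
    (ρ₀ : Γ →* GL (Fin n) K) : Type _ :=
  {α : Γ → Matrix (Fin n) (Fin n) K // ∀ γ β : Γ,
    α (γ * β) = α γ + (ρ₀ γ : Matrix (Fin n) (Fin n) K) * α β *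
      ((ρ₀ γ)⁻¹ : Matrix (Fin n) (Fin n) K)}

/-- Lifts of `ρ₀` to `GL_n(K[ε])`: homomorphisms whose composition with the reduction map
is `ρ₀`. -/
def Lift {K : Type*} [Field K] {n : ℕ} {Γ : Type*} [Group Γ]
    (ρ₀ : Γ →* GL (Fin n) K) : Type _ :=
  {ρ : Γ →* GL (Fin n) (DualNumber K) // (RedGL K n).comp ρ = ρ₀}

/-!
Since `ε² = 0`, the kernel of the reduction `GL_n(K[ε]) → GL_n(K)` is `1 + ε M_n(K)`, a copy of
the additive group `M_n(K)`, and the inclusion `GL_n(K) → GL_n(K[ε])` splits the reduction, so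
`GL_n(K[ε]) = M_n(K) ⋊ GL_n(K)` with `GL_n(K)` acting by conjugation. For any split extension
`G = V ⋊ H` with `V` abelian, a lift of `ρ₀ : Γ → H` is uniquely `ρ γ = α γ · ρ₀ γ` with
`α : Γ → V`, and `ρ` is multiplicative exactly when `α` is a 1-cocycle; conjugating `ρ` by
`ξ ∈ V` replaces `α` by `α + (ξ - ρ₀(·) ξ)`, i.e. changes it by a coboundary.
-/

open TrivSqZeroExt

namespace GroupExtension.Splitting

variable {V G H : Type*} [AddCommGroup V] [Group G] [Group H]
  {S : GroupExtension (Multiplicative V) G H} (s : S.Splitting)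

theorem exists_inl_mul_eq (g : G) : ∃ v : V, S.inl (.ofAdd v) * s (S.rightHom g) = g := by
  have hker : g * (s (S.rightHom g))⁻¹ ∈ S.inl.range := by
    rw [S.range_inl_eq_ker_rightHom, MonoidHom.mem_ker, map_mul, map_inv,
      s.rightHom_splitting, mul_inv_cancel]
  obtain ⟨v, hv⟩ := hker
  exact ⟨v.toAdd, by rw [ofAdd_toAdd, hv, inv_mul_cancel_right]⟩

theorem inl_mul_inj {v w : V} {h : H} :
    S.inl (.ofAdd v) * s h = S.inl (.ofAdd w) * s h ↔ v = w := by
  rw [mul_left_inj, S.inl_injective.eq_iff, Multiplicative.ofAdd.injective.eq_iff]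

noncomputable def coord (g : G) : V := (s.exists_inl_mul_eq g).choose

theorem inl_coord_mul (g : G) : S.inl (.ofAdd (s.coord g)) * s (S.rightHom g) = g :=
  (s.exists_inl_mul_eq g).choose_spec

theorem coord_inl_mul (v : V) (h : H) : s.coord (S.inl (.ofAdd v) * s h) = v := by
  have key := s.inl_coord_mul (S.inl (.ofAdd v) * s h)
  rwa [map_mul, S.rightHom_inl, s.rightHom_splitting, one_mul, inl_mul_inj] at key

theorem inl_coord_mul_of_comp_eq {Γ : Type*} [Group Γ] {ρ₀ : Γ →* H} {ρ : Γ →* G}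
    (hρ : S.rightHom.comp ρ = ρ₀) (γ : Γ) : S.inl (.ofAdd (s.coord (ρ γ))) * s (ρ₀ γ) = ρ γ := by
  rw [← hρ, MonoidHom.comp_apply, s.inl_coord_mul]

variable {act : H → V → V}
  (hact : ∀ h v, s h * S.inl (.ofAdd v) * (s h)⁻¹ = S.inl (.ofAdd (act h v)))
include hact

theorem inl_mul_mul_inl_mul (v w : V) (h k : H) :
    S.inl (.ofAdd v) * s h * (S.inl (.ofAdd w) * s k)
      = S.inl (.ofAdd (v + act h w)) * s (h * k) := by
  rw [ofAdd_add, map_mul, map_mul, ← hact]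
  group

theorem inl_conj_inl_mul (ξ v : V) (h : H) :
    S.inl (.ofAdd ξ) * (S.inl (.ofAdd v) * s h) * (S.inl (.ofAdd ξ))⁻¹
      = S.inl (.ofAdd (ξ + v - act h ξ)) * s h := by
  rw [sub_eq_add_neg, ofAdd_add, ofAdd_add, ofAdd_neg, map_mul, map_mul, map_inv, ← hact]
  group


variable {Γ : Type*} [Group Γ] (ρ₀ : Γ →* H)

noncomputable def liftEquivCocycle :
    {ρ : Γ →* G // S.rightHom.comp ρ = ρ₀} ≃
      {α : Γ → V // ∀ γ β, α (γ * β) = α γ + act (ρ₀ γ) (α β)} where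
  toFun ρ := ⟨fun γ => s.coord (ρ.1 γ), fun γ β => by
    rw [← s.inl_mul_inj (h := ρ₀ (γ * β)), s.inl_coord_mul_of_comp_eq ρ.2, map_mul ρ₀,
      ← s.inl_mul_mul_inl_mul hact, s.inl_coord_mul_of_comp_eq ρ.2,
      s.inl_coord_mul_of_comp_eq ρ.2, map_mul]⟩
  invFun α := ⟨MonoidHom.mk' (fun γ => S.inl (.ofAdd (α.1 γ)) * s (ρ₀ γ)) fun γ β => by
      rw [s.inl_mul_mul_inl_mul hact, ← map_mul, α.2], by
    ext γ
    simp⟩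
  left_inv ρ := Subtype.ext <| MonoidHom.ext fun γ => s.inl_coord_mul_of_comp_eq ρ.2 γ
  right_inv α := Subtype.ext <| funext fun γ => s.coord_inl_mul _ _

theorem liftEquivCocycle_conj_iff (ρ ρ' : {ρ : Γ →* G // S.rightHom.comp ρ = ρ₀}) (ξ : V) :
    (∀ γ, ρ'.1 γ = S.inl (.ofAdd ξ) * ρ.1 γ * (S.inl (.ofAdd ξ))⁻¹) ↔
      ∀ γ, (s.liftEquivCocycle hact ρ₀ ρ').1 γ - (s.liftEquivCocycle hact ρ₀ ρ).1 γ
        = ξ - act (ρ₀ γ) ξ := by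
  refine forall_congr' fun γ => ?_
  rw [← s.inl_coord_mul_of_comp_eq ρ'.2, ← s.inl_coord_mul_of_comp_eq ρ.2,
    s.inl_conj_inl_mul hact, s.inl_mul_inj, sub_eq_iff_eq_add, sub_add_eq_add_sub]
  rfl

theorem liftEquivCocycle_rel_iff (ρ ρ' : {ρ : Γ →* G // S.rightHom.comp ρ = ρ₀}) :
    (∃ u, u ∈ S.rightHom.ker ∧ ∀ γ, ρ'.1 γ = u * ρ.1 γ * u⁻¹) ↔
      ∃ ξ, ∀ γ, (s.liftEquivCocycle hact ρ₀ ρ').1 γ - (s.liftEquivCocycle hact ρ₀ ρ).1 γ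
        = ξ - act (ρ₀ γ) ξ := by
  constructor
  · rintro ⟨_, hu, h⟩
    obtain ⟨ξ, rfl⟩ := S.range_inl_eq_ker_rightHom ▸ hu
    exact ⟨ξ.toAdd, (s.liftEquivCocycle_conj_iff hact ρ₀ ρ ρ' ξ.toAdd).1 h⟩
  · rintro ⟨ξ, h⟩
    exact ⟨_, S.range_inl_eq_ker_rightHom ▸ ⟨.ofAdd ξ, rfl⟩,
      (s.liftEquivCocycle_conj_iff hact ρ₀ ρ ρ' ξ).2 h⟩

end GroupExtension.Splitting

namespace Matrix

variable {n R : Type*} [Fintype n] [Semiring R]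

theorem map_inl_mul_map_inr (A X : Matrix n n R) :
    A.map (inl : R → R[ε]) * X.map inr = (A * X).map inr := by
  ext i j : 1
  simp only [mul_apply, map_apply, inl_mul_inr, smul_eq_mul, inr_sum]

theorem map_inr_mul_map_inl (X A : Matrix n n R) :
    X.map (inr : R → R[ε]) * A.map inl = (X * A).map inr := by
  ext i j : 1
  simp only [mul_apply, map_apply, inr_mul_inl, op_smul_eq_mul, inr_sum]

theorem map_inr_mul_map_inr (X Y : Matrix n n R) : X.map (inr : R → R[ε]) * Y.map inr = 0 := by
  ext i j : 1
  simp only [mul_apply, map_apply, inr_mul_inr, Finset.sum_const_zero, zero_apply]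

theorem map_fst_map_inl_add_map_snd_map_inr {m n R : Type*} [AddZeroClass R]
    (A : Matrix m n R[ε]) : (A.map fst).map inl + (A.map snd).map inr = A :=
  ext fun _ _ => inl_fst_add_inr_snd_eq _

namespace GeneralLinearGroup

variable {n R : Type*} [Fintype n] [DecidableEq n] [CommRing R]

noncomputable def mapInl : GL n R →* GL n R[ε] := map (inlHom R R)

theorem coe_mapInl (g : GL n R) : (mapInl g : Matrix n n R[ε]) = (g : Matrix n n R).map inl :=
  rfl

noncomputable def oneAddEps : Multiplicative (Matrix n n R) →* GL n R[ε] where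
  toFun X :=
    ⟨1 + X.toAdd.map inr, 1 - X.toAdd.map inr,
      by rw [mul_sub, mul_one, add_mul, one_mul, map_inr_mul_map_inr, add_zero,
        add_sub_cancel_right],
      by rw [mul_add, mul_one, sub_mul, one_mul, map_inr_mul_map_inr, sub_zero, sub_add_cancel]⟩
  map_one' := Units.ext <| by simp
  map_mul' X Y := Units.ext <| by
    simp only [toAdd_mul, Units.val_mul, add_mul, mul_add, one_mul, mul_one, map_inr_mul_map_inr,
      add_zero, Matrix.map_add _ (inr_add R), add_assoc]

theorem coe_oneAddEps (X : Multiplicative (Matrix n n R)) :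
    (oneAddEps X : Matrix n n R[ε]) = 1 + X.toAdd.map inr :=
  rfl

theorem oneAddEps_injective : Function.Injective (oneAddEps (n := n) (R := R)) := by
  intro X Y h
  have hval := congrArg Units.val h
  rw [coe_oneAddEps, coe_oneAddEps, add_right_inj] at hval
  exact map_injective inr_injective hval

theorem mapInl_mul_oneAddEps_mul_inv (g : GL n R) (X : Matrix n n R) :
    mapInl g * oneAddEps (.ofAdd X) * (mapInl g)⁻¹
      = oneAddEps (.ofAdd ((g : Matrix n n R) * X * (g : Matrix n n R)⁻¹)) := by
  ext1
  rw [Units.val_mul, Units.val_mul, coe_oneAddEps, coe_oneAddEps, toAdd_ofAdd, toAdd_ofAdd,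
    mul_add, mul_one, add_mul, Units.mul_inv, ← map_inv, coe_mapInl, coe_mapInl,
    map_inl_mul_map_inr, map_inr_mul_map_inl, coe_units_inv]

end GeneralLinearGroup

end Matrix

section RedGL

variable {K : Type*} [Field K] {n : ℕ}

open Matrix.GeneralLinearGroup

theorem redGL_mapInl (g : GL (Fin n) K) : RedGL K n (mapInl g) = g :=
  Units.ext <| Matrix.ext fun _ _ => rfl

theorem ker_redGL : (RedGL K n).ker = (oneAddEps (n := Fin n) (R := K)).range := by
  ext u
  rw [MonoidHom.mem_ker, MonoidHom.mem_range]
  constructor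
  · intro hu
    refine ⟨.ofAdd ((u : Matrix (Fin n) (Fin n) K[ε]).map snd), Units.ext ?_⟩
    have hfst : (u : Matrix (Fin n) (Fin n) K[ε]).map fst = 1 := congrArg Units.val hu
    have hdecomp := (u : Matrix (Fin n) (Fin n) K[ε]).map_fst_map_inl_add_map_snd_map_inr
    rwa [hfst, Matrix.map_one inl (inl_zero _) (inl_one _)] at hdecomp
  · rintro ⟨X, rfl⟩
    refine Units.ext <| Matrix.ext fun i j => ?_
    by_cases hij : i = j <;> simp [RedGL, redK, coe_oneAddEps, one_apply, hij]

variable (K n)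

noncomputable def dualNumberExtension :
    GroupExtension (Multiplicative (Matrix (Fin n) (Fin n) K)) (GL (Fin n) K[ε])
      (GL (Fin n) K) where
  inl := oneAddEps
  rightHom := RedGL K n
  inl_injective := oneAddEps_injective
  range_inl_eq_ker_rightHom := ker_redGL.symm
  rightHom_surjective g := ⟨mapInl g, redGL_mapInl g⟩

noncomputable def dualNumberSplitting : (dualNumberExtension K n).Splitting where
  toMonoidHom := mapInl
  rightInverse_rightHom := redGL_mapInl

end RedGL

/-- the set of lifts of `ρ₀` to `GL_n(K[ε])`, taken up to conjugation by
elements of the kernel of the reduction map, is in bijection with `H¹(Γ, M_n(K))` for the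
adjoint action, i.e. 1-cocycles modulo 1-coboundaries. -/
theorem stmt_5 (K : Type*) [Field K] (n : ℕ) (Γ : Type*) [Group Γ]
    (ρ₀ : Γ →* GL (Fin n) K) :
    Nonempty (
      Quot (fun (ρ ρ' : Lift ρ₀) =>
        ∃ u : GL (Fin n) (DualNumber K), u ∈ (RedGL K n).ker ∧
          ∀ γ : Γ, ρ'.1 γ = u * ρ.1 γ * u⁻¹) ≃
      Quot (fun (α α' : Cocycle ρ₀) =>
        ∃ ξ : Matrix (Fin n) (Fin n) K, ∀ γ : Γ,
          α'.1 γ - α.1 γ = ξ - (ρ₀ γ : Matrix (Fin n) (Fin n) K) * ξ *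
            ((ρ₀ γ)⁻¹ : Matrix (Fin n) (Fin n) K))) := by
  have hconj := Matrix.GeneralLinearGroup.mapInl_mul_oneAddEps_mul_inv (n := Fin n) (R := K)
  exact ⟨Quot.congr ((dualNumberSplitting K n).liftEquivCocycle hconj ρ₀)
    ((dualNumberSplitting K n).liftEquivCocycle_rel_iff hconj ρ₀)⟩
end
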